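/- Let X be a Banach space and β > 0. If f : ℝ → X is almost periodic (bounded continuous, and for every ε > 0 there exists ℓ > 0 such that every interval of length ℓ contains some T with sup_{t∈ℝ}‖f(t+T)-f(t)‖ < ε), then F(t) = ∫_{-∞}^t e^{-β(t-τ)} f(τ) dτ is also almost periodic. -/

import Mathlib

open MeasureTheory Real Set Filter

/-- Bohr almost periodicity: continuous, bounded, and for every `ε > 0` there is an
inclusion length `ℓ` such that every interval of length `ℓ` contains an `ε`-almost period. -/
def IsAlmostPeriodic {X : Type*} [NormedAddCommGroup X] (f : ℝ → X) : Prop :=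
  Continuous f ∧ (∃ C : ℝ, ∀ t : ℝ, ‖f t‖ ≤ C) ∧
    ∀ ε > (0:ℝ), ∃ ℓ > (0:ℝ), ∀ a : ℝ, ∃ T ∈ Set.Icc a (a + ℓ),
      ∀ t : ℝ, ‖f (t + T) - f t‖ < ε

/-! Substituting `τ = t - s` writes `F` as the convolution `k ⋆ f` of `f` with the integrable
kernel `k s = e^{-βs}` on `(0, ∞)`. Convolution with any integrable kernel `k` preserves Bohr
almost periodicity: it preserves bounded continuity, and since
`(k ⋆ f)(t + T) - (k ⋆ f)(t) = (k ⋆ (f(· + T) - f))(t)`, every `δ`-almost period of `f` is a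
`‖k‖₁ δ`-almost period of `k ⋆ f`. -/

open scoped Convolution
open ContinuousLinearMap (lsmul)

section Convolution

variable {X : Type*} [NormedAddCommGroup X] [NormedSpace ℝ X] {μ : Measure ℝ} {k : ℝ → ℝ}
  {g : ℝ → X}

theorem setIntegral_Iio_eq_setIntegral_Ioi_sub (t : ℝ) (g : ℝ → X) :
    ∫ τ in Iio t, g τ = ∫ s in Ioi 0, g (t - s) := by
  rw [← (Measure.measurePreserving_sub_left volume t).setIntegral_preimage_emb
    (MeasurableEquiv.subLeft t).measurableEmbedding g (Iio t)]
  congr 1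
  ext s
  simp

theorem MeasureTheory.Integrable.smul_comp_const_sub (hk : Integrable k μ) (hg : Continuous g)
    {C : ℝ} (hC : ∀ s, ‖g s‖ ≤ C) (t : ℝ) : Integrable (fun s => k s • g (t - s)) μ :=
  hk.smul_bdd C (hg.comp (continuous_const.sub continuous_id)).aestronglyMeasurable
    (Eventually.of_forall fun _ => hC _)

theorem norm_convolution_lsmul_le (hk : Integrable k μ) {D : ℝ} (hg : ∀ s, ‖g s‖ ≤ D)
    (t : ℝ) : ‖(k ⋆[lsmul ℝ ℝ, μ] g) t‖ ≤ (∫ s, ‖k s‖ ∂μ) * D := by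
  rw [convolution_lsmul, ← integral_mul_const]
  refine norm_integral_le_of_norm_le (hk.norm.mul_const D) (Eventually.of_forall fun s => ?_)
  rw [norm_smul]
  exact mul_le_mul_of_nonneg_left (hg _) (norm_nonneg _)

theorem convolution_lsmul_add_sub (hk : Integrable k μ) (hg : Continuous g) {C : ℝ}
    (hC : ∀ s, ‖g s‖ ≤ C) (t T : ℝ) :
    (k ⋆[lsmul ℝ ℝ, μ] g) (t + T) - (k ⋆[lsmul ℝ ℝ, μ] g) t =
      (k ⋆[lsmul ℝ ℝ, μ] fun s => g (s + T) - g s) t := by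
  have hint := hk.smul_comp_const_sub hg hC
  simp only [convolution_lsmul]
  rw [← integral_sub (hint (t + T)) (hint t)]
  congr 1 with s
  rw [smul_sub, sub_add_eq_add_sub]

theorem IsAlmostPeriodic.convolution_lsmul {f : ℝ → X} (hf : IsAlmostPeriodic f)
    (hk : Integrable k μ) : IsAlmostPeriodic (k ⋆[lsmul ℝ ℝ, μ] f) := by
  obtain ⟨hfc, ⟨C, hC⟩, hap⟩ := hf
  set K := ∫ s, ‖k s‖ ∂μ
  have hK : 0 ≤ K := integral_nonneg fun _ => norm_nonneg _
  refine ⟨?_, ⟨K * C, norm_convolution_lsmul_le hk hC⟩, fun ε hε => ?_⟩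
  · exact BddAbove.continuous_convolution_right_of_integrable _ ⟨C, forall_mem_range.2 hC⟩ hk hfc
  obtain ⟨ℓ, hℓ, hT⟩ := hap (ε / (K + 1)) (by positivity)
  refine ⟨ℓ, hℓ, fun a => ?_⟩
  obtain ⟨T, hTa, hTf⟩ := hT a
  refine ⟨T, hTa, fun t => ?_⟩
  rw [convolution_lsmul_add_sub hk hfc hC]
  calc _ ≤ K * (ε / (K + 1)) := norm_convolution_lsmul_le hk (fun s => (hTf s).le) t
    _ < ε := by rw [mul_div_assoc', div_lt_iff₀ (by positivity)]; linarith

end Convolution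

theorem stmt_9_general {X : Type*} [NormedAddCommGroup X] [NormedSpace ℝ X]
    (β : ℝ) (hβ : 0 < β) (f : ℝ → X) (hf : IsAlmostPeriodic f)
    (F : ℝ → X)
    (hF : ∀ t : ℝ, F t = ∫ τ in Iio t, Real.exp (-β * (t - τ)) • f τ) :
    IsAlmostPeriodic F := by
  have hF_conv : F = (fun s => exp (-β * s)) ⋆[lsmul ℝ ℝ, volume.restrict (Ioi 0)] f := by
    funext t
    simp only [hF t, setIntegral_Iio_eq_setIntegral_Ioi_sub t, sub_sub_cancel, convolution_lsmul]
  exact hF_conv ▸ hf.convolution_lsmul (exp_neg_integrableOn_Ioi 0 hβ)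

theorem stmt_9 {X : Type*} [NormedAddCommGroup X] [NormedSpace ℝ X] [CompleteSpace X]
    (β : ℝ) (hβ : 0 < β) (f : ℝ → X) (hf : IsAlmostPeriodic f)
    (F : ℝ → X)
    (hF : ∀ t : ℝ, F t = ∫ τ in Iio t, Real.exp (-β * (t - τ)) • f τ) :
    IsAlmostPeriodic F :=
  stmt_9_general β hβ f hf F hF
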